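/- arXiv:0710.5893 — 7 statements merged into one kernel-verified Lean document; each statement's English description precedes it below -/
import Mathlib

section
/- Let R be a ring and G a finite group of order n with a fixed listing g_1, …, g_n of its elements. The map σ sending w = Σ_{g∈G} α_g g in the group ring RG to the n×n matrix over R whose (i,j) entry is α_{g_i⁻¹ g_j} is an injective ring homomorphism, and its image is exactly the set of RG-matrices, i.e. the set of n×n matrices A over R for which there exists a function f : G → R with A_{ij} = f(g_i⁻¹ g_j) for all i, j. -/
/-!
Entry `(i,j)` of `σ(w)` sees `w` only through `(g i)⁻¹ * g j`. Multiplicativity is the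
substitution `b = g i * a`, then `b = g k`, in the convolution sum
`(w * v)(x) = ∑ₐ w(a) v(a⁻¹ x)`; injectivity and the description of the image both come
from reading the coefficient of `x` off the entry `(g⁻¹ 1, g⁻¹ x)`.
-/

/-- The `RG`-matrix of an element `w` of the group ring `RG`, relative to a
listing `g : Fin n ≃ G` of the elements of `G`: its `(i,j)` entry is the
coefficient of `(g i)⁻¹ * g j` in `w`. -/
noncomputable def rgMatrix {R : Type*} [Semiring R] {G : Type*} [Group G] {n : ℕ}
    (g : Fin n ≃ G) (w : MonoidAlgebra R G) : Matrix (Fin n) (Fin n) R :=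
  Matrix.of fun i j => w.coeff ((g i)⁻¹ * g j)

theorem MonoidAlgebra.coeff_mul_eq_sum {R : Type*} [Semiring R] {G : Type*} [Group G]
    [Fintype G] (w v : MonoidAlgebra R G) (x : G) :
    (w * v).coeff x = ∑ a : G, w.coeff a * v.coeff (a⁻¹ * x) := by
  rw [MonoidAlgebra.coeff_mul_apply_left, Finsupp.sum_fintype]
  intro a
  simp

section

variable {R : Type*} [Semiring R] {G : Type*} [Group G] {n : ℕ} (g : Fin n ≃ G)

@[simp]
theorem rgMatrix_apply (w : MonoidAlgebra R G) (i j : Fin n) :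
    rgMatrix g w i j = w.coeff ((g i)⁻¹ * g j) :=
  rfl

theorem rgMatrix_one : rgMatrix g (1 : MonoidAlgebra R G) = 1 := by
  classical
  ext i j
  have : 1 = (g i)⁻¹ * g j ↔ i = j := by rw [eq_comm, inv_mul_eq_one, g.apply_eq_iff_eq]
  simp only [rgMatrix_apply, MonoidAlgebra.one_def, MonoidAlgebra.coeff_single,
    Finsupp.single_apply, Matrix.one_apply, this]

theorem rgMatrix_mul (w v : MonoidAlgebra R G) :
    rgMatrix g (w * v) = rgMatrix g w * rgMatrix g v := by
  have : Fintype G := Fintype.ofEquiv (Fin n) g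
  ext i j
  rw [rgMatrix_apply, MonoidAlgebra.coeff_mul_eq_sum, Matrix.mul_apply]
  calc ∑ a : G, w.coeff a * v.coeff (a⁻¹ * ((g i)⁻¹ * g j))
      = ∑ b : G, w.coeff ((g i)⁻¹ * b) * v.coeff (b⁻¹ * g j) :=
        Fintype.sum_equiv (Equiv.mulLeft (g i)) _ _ fun a => by simp [mul_assoc]
    _ = ∑ k : Fin n, rgMatrix g w i k * rgMatrix g v k j :=
        (g.sum_comp fun b => w.coeff ((g i)⁻¹ * b) * v.coeff (b⁻¹ * g j)).symm

theorem rgMatrix_add (w v : MonoidAlgebra R G) :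
    rgMatrix g (w + v) = rgMatrix g w + rgMatrix g v := by
  ext i j
  exact Finsupp.add_apply w.coeff v.coeff _

theorem rgMatrix_zero : rgMatrix g (0 : MonoidAlgebra R G) = 0 := by
  ext i j
  rfl

noncomputable def rgMatrixRingHom : MonoidAlgebra R G →+* Matrix (Fin n) (Fin n) R where
  toFun := rgMatrix g
  map_one' := rgMatrix_one g
  map_mul' := rgMatrix_mul g
  map_zero' := rgMatrix_zero g
  map_add' := rgMatrix_add g

theorem rgMatrix_apply_symm_one_symm (w : MonoidAlgebra R G) (x : G) :
    rgMatrix g w (g.symm 1) (g.symm x) = w.coeff x := by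
  simp

theorem rgMatrix_injective : Function.Injective (rgMatrix (R := R) g) := fun w v h => by
  ext x
  rw [← rgMatrix_apply_symm_one_symm g w, ← rgMatrix_apply_symm_one_symm g v, h]

theorem range_rgMatrix :
    Set.range (rgMatrix (R := R) g) =
      {A | ∃ f : G → R, ∀ i j, A i j = f ((g i)⁻¹ * g j)} := by
  have : Finite G := Finite.of_equiv (Fin n) g
  ext A
  constructor
  · rintro ⟨w, rfl⟩
    exact ⟨w.coeff, fun i j => rfl⟩
  · rintro ⟨f, hf⟩
    refine ⟨MonoidAlgebra.ofCoeff (Finsupp.equivFunOnFinite.symm f), ?_⟩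
    ext i j
    simp [hf i j]

end

/-- the map `σ = rgMatrix g` is an injective ring homomorphism from the
group ring `RG` to the `n × n` matrices over `R`, whose image is exactly the set of
`RG`-matrices, i.e. the matrices `A` for which there is `f : G → R` with
`A i j = f ((g i)⁻¹ * g j)`. -/
theorem stmt0 {R : Type*} [Ring R] {G : Type*} [Group G] {n : ℕ}
    (g : Fin n ≃ G) :
    ∃ σ : MonoidAlgebra R G →+* Matrix (Fin n) (Fin n) R,
      (∀ w : MonoidAlgebra R G, σ w = rgMatrix g w) ∧
      Function.Injective σ ∧
      Set.range σ =
        {A : Matrix (Fin n) (Fin n) R | ∃ f : G → R, ∀ i j, A i j = f ((g i)⁻¹ * g j)} :=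
  ⟨rgMatrixRingHom g, fun _ => rfl, rgMatrix_injective g, range_rgMatrix g⟩
end

section
/- Let R be a field and G a finite group of order n with a fixed listing g_1, …, g_n. For every non-zero element u of the group ring RG: u is a zero-divisor (there exists non-zero w ∈ RG with uw = 0) if and only if det σ(u) = 0; and u is a unit of RG if and only if det σ(u) ≠ 0. -/
namespace Algebra

variable {R S : Type*} [CommRing R] [Ring S] [Algebra R S] [Module.Free R S] [Module.Finite R S]

theorem isUnit_norm_iff {x : S} : IsUnit (norm R x) ↔ IsUnit x := by
  rw [norm_apply, ← LinearMap.isUnit_iff_isUnit_det, lmul_isUnit_iff]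

theorem norm_eq_zero_iff_exists_mul_eq_zero [IsDomain R] {x : S} :
    norm R x = 0 ↔ ∃ w : S, w ≠ 0 ∧ x * w = 0 := by
  rw [norm_apply, LinearMap.det_eq_zero_iff_ker_ne_bot, Submodule.ne_bot_iff]
  simp [and_comm]

end Algebra

theorem rgMatrix_det_eq_norm {R : Type*} [CommRing R] {G : Type*} [Group G] {n : ℕ}
    (g : Fin n ≃ G) (u : MonoidAlgebra R G) : (rgMatrix g u).det = Algebra.norm R u := by
  let b := (MonoidAlgebra.basis G R).reindex (g.trans (Equiv.inv G)).symm
  have hb : Algebra.leftMulMatrix b u = rgMatrix g u := by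
    ext i j
    rw [Algebra.leftMulMatrix_eq_repr_mul, Module.Basis.repr_reindex_apply]
    change (u * _).coeff _ = _
    simp [b, rgMatrix, MonoidAlgebra.coeff_mul_single_apply]
  rw [Algebra.norm_eq_matrix_det b, hb]

theorem stmt1_general {R : Type*} [Field R] {G : Type*} [Group G] {n : ℕ}
    (g : Fin n ≃ G) (u : MonoidAlgebra R G) :
    ((∃ w : MonoidAlgebra R G, w ≠ 0 ∧ u * w = 0) ↔ (rgMatrix g u).det = 0) ∧
    (IsUnit u ↔ (rgMatrix g u).det ≠ 0) := by
  have : Finite G := .of_equiv _ g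
  rw [rgMatrix_det_eq_norm, ← isUnit_iff_ne_zero, Algebra.isUnit_norm_iff,
    Algebra.norm_eq_zero_iff_exists_mul_eq_zero]
  exact ⟨Iff.rfl, Iff.rfl⟩

/-- over a field `R`, a non-zero element `u` of the group ring `RG`
is a zero-divisor iff `det σ(u) = 0`, and a unit iff `det σ(u) ≠ 0`. -/
theorem stmt1 {R : Type*} [Field R] {G : Type*} [Group G] {n : ℕ}
    (g : Fin n ≃ G) (u : MonoidAlgebra R G) (hu : u ≠ 0) :
    ((∃ w : MonoidAlgebra R G, w ≠ 0 ∧ u * w = 0) ↔ (rgMatrix g u).det = 0) ∧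
    (IsUnit u ↔ (rgMatrix g u).det ≠ 0) :=
  stmt1_general g u
end

section
/- Let R be a field, G a finite group of order n with listing g_1, …, g_n, and u, v ∈ RG with uv = 0, rank σ(u) = r, and rank σ(v) = n − r. Let S = {g_{i_1}, …, g_{i_r}} ⊆ G be such that the family (s·u)_{s∈S} is R-linearly independent, let W be the R-span of S in RG, and let C = {xu : x ∈ W}. Then for every y ∈ RG: y ∈ C if and only if yv = 0. -/
open scoped Matrix

namespace MonoidAlgebra

variable {R : Type*} {G : Type*} [Group G] {n : ℕ}

noncomputable def basisOfListing [Semiring R] (g : Fin n ≃ G) :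
    Module.Basis (Fin n) R (MonoidAlgebra R G) :=
  (MonoidAlgebra.basis G R).reindex g.symm

theorem toMatrix_mulRight [CommSemiring R] (g : Fin n ≃ G) (v : MonoidAlgebra R G) :
    LinearMap.toMatrix (basisOfListing g) (basisOfListing g) (LinearMap.mulRight R v) =
      (rgMatrix g v)ᵀ := by
  ext i j
  simp only [basisOfListing, LinearMap.toMatrix_apply, Module.Basis.coe_reindex, Equiv.symm_symm,
    Function.comp_apply, basis_apply, Module.Basis.repr_reindex, Finsupp.mapDomain_equiv_apply,
    LinearMap.mulRight_apply, rgMatrix, Matrix.transpose_apply, Matrix.of_apply]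
  exact (coeff_single_mul_apply v 1 (g j) (g i)).trans (one_mul _)

theorem finrank_range_mulRight [Field R] (g : Fin n ≃ G) (v : MonoidAlgebra R G) :
    Module.finrank R (LinearMap.range (LinearMap.mulRight R v)) = (rgMatrix g v).rank := by
  rw [← Matrix.rank_transpose, ← toMatrix_mulRight g, Matrix.rank_eq_finrank_range_toLin _
    (basisOfListing g) (basisOfListing g), Matrix.toLin_toMatrix]

theorem finrank_ker_mulRight [Field R] (g : Fin n ≃ G) (v : MonoidAlgebra R G) :
    Module.finrank R (LinearMap.ker (LinearMap.mulRight R v)) = n - (rgMatrix g v).rank := by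
  have := Module.Finite.of_basis (basisOfListing (R := R) g)
  have h := (LinearMap.mulRight R v).finrank_range_add_finrank_ker
  rw [Module.finrank_eq_card_basis (basisOfListing g), Fintype.card_fin] at h
  rw [← finrank_range_mulRight g]
  omega

theorem map_mulRight_span_of [CommSemiring R] {M : Type*} [Monoid M] (s : Set M)
    (u : MonoidAlgebra R M) :
    (Submodule.span R (of R M '' s)).map (LinearMap.mulRight R u) =
      Submodule.span R (Set.range fun m : s => of R M m * u) := by
  rw [Submodule.map_span, Set.image_image, Set.image_eq_range]
  rfl

theorem span_translates_eq_ker_mulRight [Field R] (g : Fin n ≃ G) {u v : MonoidAlgebra R G}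
    (huv : u * v = 0) (S : Finset G)
    (hind : LinearIndependent R fun s : S => of R G s * u)
    (hcard : S.card = n - (rgMatrix g v).rank) :
    Submodule.span R (Set.range fun s : S => of R G s * u) =
      LinearMap.ker (LinearMap.mulRight R v) := by
  have := Module.Finite.of_basis (basisOfListing (R := R) g)
  refine Submodule.eq_of_le_of_finrank_eq ?_ ?_
  · rw [Submodule.span_le]
    rintro _ ⟨s, rfl⟩
    simp [mul_assoc, huv]
  · rw [finrank_span_eq_card hind, Fintype.card_coe, hcard, finrank_ker_mulRight g]

end MonoidAlgebra

theorem stmt7_general {R : Type*} [Field R] {G : Type*} [Group G] {n r : ℕ}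
    (g : Fin n ≃ G) (u v : MonoidAlgebra R G)
    (huv : u * v = 0)
    (hrv : (rgMatrix g v).rank = n - r)
    (S : Finset G) (hcard : S.card = r)
    (hind : LinearIndependent R fun s : S => MonoidAlgebra.of R G (s : G) * u)
    (y : MonoidAlgebra R G) :
    (∃ x ∈ Submodule.span R (MonoidAlgebra.of R G '' (S : Set G)), y = x * u) ↔
      y * v = 0 := by
  have : Fintype G := .ofEquiv _ g
  -- needed so that `n - (n - r) = r` in `ℕ`
  have hrn : r ≤ n := by
    rw [← hcard, ← Fintype.card_fin n, Fintype.card_congr g]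
    exact S.card_le_univ
  have hC : (Submodule.span R (MonoidAlgebra.of R G '' (S : Set G))).map (LinearMap.mulRight R u) =
      LinearMap.ker (LinearMap.mulRight R v) :=
    (MonoidAlgebra.map_mulRight_span_of _ u).trans
      (MonoidAlgebra.span_translates_eq_ker_mulRight g huv S hind (by rw [hcard, hrv]; omega))
  change _ ↔ y ∈ LinearMap.ker (LinearMap.mulRight R v)
  rw [← hC, Submodule.mem_map]
  exact exists_congr fun x => and_congr_right fun _ => eq_comm

/-- suppose `u v = 0`, `rank σ(u) = r`, `rank σ(v) = n - r`, and
`S ⊆ G` is a set of `r` group elements such that `(s • u)_{s ∈ S}` is linearly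
independent; let `W` be the `R`-span of `S` and `C = {x * u : x ∈ W}`.
Then `y ∈ C` iff `y * v = 0`. -/
theorem stmt7 {R : Type*} [Field R] {G : Type*} [Group G] {n r : ℕ}
    (g : Fin n ≃ G) (u v : MonoidAlgebra R G)
    (huv : u * v = 0)
    (hru : (rgMatrix g u).rank = r)
    (hrv : (rgMatrix g v).rank = n - r)
    (S : Finset G) (hcard : S.card = r)
    (hind : LinearIndependent R fun s : S => MonoidAlgebra.of R G (s : G) * u)
    (y : MonoidAlgebra R G) :
    (∃ x ∈ Submodule.span R (MonoidAlgebra.of R G '' (S : Set G)), y = x * u) ↔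
      y * v = 0 :=
  stmt7_general g u v huv hrv S hcard hind y
end

section
/- Let R be a commutative ring, G a finite group, and u ∈ RG a unit with inverse u⁻¹ (so uu⁻¹ = u⁻¹u = 1). Let S ⊆ G, let W be the R-span of S in RG, and let W^⊥ be the R-span of G∖S. Then the dual of the unit-derived code C = {xu : x ∈ W}, namely C^⊥ = {y ∈ RG : ⟨xu, y⟩ = 0 for all x ∈ W}, equals {x·(u⁻¹)ᵀ : x ∈ W^⊥}. -/
/-!
Transposition `w ↦ wᵀ` is an anti-automorphism of `RG` and is adjoint to right multiplication
for the coefficientwise inner product: `⟨x u, y⟩ = ⟨x, y uᵀ⟩`. Hence `y` is orthogonal to the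
code `W u` iff `y uᵀ` is orthogonal to `W = span S`, i.e. iff `y uᵀ` is supported on `G ∖ S`;
since `uᵀ` is a unit with inverse `(u⁻¹)ᵀ`, this says `y ∈ W^⊥ (u⁻¹)ᵀ`.
-/

/-- The transpose `wᵀ = Σ_g α_g g⁻¹` of a group ring element `w = Σ_g α_g g`. -/
noncomputable def grT {R : Type*} [Semiring R] {G : Type*} [Group G]
    (w : MonoidAlgebra R G) : MonoidAlgebra R G :=
  MonoidAlgebra.ofCoeff (Finsupp.equivMapDomain (Equiv.inv G) w.coeff)

/-- The inner product `⟨x, y⟩ = Σ_g α_g β_g` of group ring elements. -/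
noncomputable def grInner {R : Type*} [Semiring R] {G : Type*} [Fintype G]
    (x y : MonoidAlgebra R G) : R :=
  ∑ h : G, x.coeff h * y.coeff h

open MonoidAlgebra

section Semiring

variable {R : Type*} [Semiring R] {G : Type*}

lemma MonoidAlgebra.span_of_image_eq_supported [Monoid G] (T : Set G) :
    Submodule.span R (of R G '' T) = supported R R T :=
  (supported_eq_span_single R T).symm

lemma grInner_eq_zero_of_mem_supported [Fintype G] {S : Set G} {x z : MonoidAlgebra R G}
    (hx : x ∈ supported R R S) (hz : z ∈ supported R R Sᶜ) : grInner x z = 0 :=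
  Finset.sum_eq_zero fun h _ => by
    by_cases hh : h ∈ S
    · rw [mem_supported'.1 hz h (Set.notMem_compl_iff.2 hh), mul_zero]
    · rw [mem_supported'.1 hx h hh, zero_mul]

lemma grInner_of_left [Monoid G] [Fintype G] (g : G) (z : MonoidAlgebra R G) :
    grInner (of R G g) z = z.coeff g := by
  classical
  simp [grInner, of_apply, Finsupp.single_apply, ite_mul]

lemma mem_supported_compl_iff_forall_grInner_eq_zero [Monoid G] [Fintype G] (S : Set G)
    (z : MonoidAlgebra R G) :
    z ∈ supported R R Sᶜ ↔ ∀ x ∈ supported R R S, grInner x z = 0 := by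
  refine ⟨fun hz x hx => grInner_eq_zero_of_mem_supported hx hz, fun h => ?_⟩
  refine mem_supported'.2 fun g hg => ?_
  rw [← span_of_image_eq_supported] at h
  rw [← grInner_of_left]
  exact h _ (Submodule.subset_span ⟨g, not_not.1 hg, rfl⟩)

lemma MonoidAlgebra.coeff_mul_apply_eq_sum [Group G] [Fintype G] (x y : MonoidAlgebra R G)
    (g : G) : (x * y).coeff g = ∑ a : G, x.coeff a * y.coeff (a⁻¹ * g) := by
  rw [coeff_mul_apply_left]
  exact Finsupp.sum_fintype _ _ (by simp)

lemma coeff_grT [Group G] (w : MonoidAlgebra R G) (g : G) : (grT w).coeff g = w.coeff g⁻¹ := by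
  simp [grT, Finsupp.equivMapDomain_apply]

lemma grT_one [Group G] : grT (1 : MonoidAlgebra R G) = 1 := by
  classical
  ext g
  simp [coeff_grT, one_def, Finsupp.single_apply, eq_comm]

end Semiring

section CommSemiring

variable {R : Type*} [CommSemiring R] {G : Type*} [Group G] [Fintype G]

lemma grT_mul (a b : MonoidAlgebra R G) : grT (a * b) = grT b * grT a := by
  ext g
  rw [coeff_grT, coeff_mul_apply_eq_sum, coeff_mul_apply_eq_sum]
  refine Fintype.sum_equiv (Equiv.mulLeft g) _ _ fun k => ?_
  simp [coeff_grT, mul_comm]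

lemma grT_mul_grT_of_mul_eq_one {a b : MonoidAlgebra R G} (h : b * a = 1) :
    grT a * grT b = 1 := by
  rw [← grT_mul, h, grT_one]

lemma grInner_mul_eq_grInner_mul_grT (x u y : MonoidAlgebra R G) :
    grInner (x * u) y = grInner x (y * grT u) := by
  simp only [grInner, coeff_mul_apply_eq_sum, Finset.sum_mul, Finset.mul_sum, coeff_grT]
  rw [Finset.sum_comm]
  refine Fintype.sum_congr _ _ fun h => Fintype.sum_congr _ _ fun g => ?_
  rw [mul_inv_rev, inv_inv]
  ring

end CommSemiring

/-- let `R` be a commutative ring, `G` a finite group, `u` a unit of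
`RG` with inverse `uinv`, `S ⊆ G`, `W = span S`, `W^⊥ = span (G \ S)`. Then the dual
of the unit-derived code `C = {x u : x ∈ W}` equals `{x (u⁻¹)ᵀ : x ∈ W^⊥}`. -/
theorem stmt14 {R : Type*} [CommRing R] {G : Type*} [Group G] [Fintype G]
    (u uinv : MonoidAlgebra R G)
    (h1 : u * uinv = 1) (h2 : uinv * u = 1)
    (S : Set G) :
    {y : MonoidAlgebra R G |
        ∀ x ∈ Submodule.span R (MonoidAlgebra.of R G '' S), grInner (x * u) y = 0}
      = {y : MonoidAlgebra R G |
          ∃ x ∈ Submodule.span R (MonoidAlgebra.of R G '' Sᶜ), y = x * grT uinv} := by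
  ext y
  have hcancel : ∀ x, y = x * grT uinv ↔ y * grT u = x := fun x =>
    ⟨fun hy => by rw [hy, mul_assoc, grT_mul_grT_of_mul_eq_one h1, mul_one],
     fun hx => by rw [← hx, mul_assoc, grT_mul_grT_of_mul_eq_one h2, mul_one]⟩
  simp only [Set.mem_ofPred_eq, span_of_image_eq_supported, grInner_mul_eq_grInner_mul_grT,
    hcancel, exists_eq_right', ← mem_supported_compl_iff_forall_grInner_eq_zero]
end

section
/- Let R be a field, let G be the cyclic group of order n generated by g, with listing 1, g, g², …, g^{n−1}, and let p, q ∈ R[x] be polynomials with p·q = x^n − 1. Let u, v ∈ RG be the images of p and q under the ring homomorphism R[x] → RG sending x to g. Then rank σ(u) + rank σ(v) = n. -/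
open Polynomial Module
open scoped Matrix

theorem rgMatrix_eq_transpose_toMatrix_mulRight {R : Type*} [CommSemiring R] {G : Type*}
    [Group G] {n : ℕ} (e : Fin n ≃ G) (w : MonoidAlgebra R G) :
    rgMatrix e w = (LinearMap.toMatrix ((MonoidAlgebra.basis G R).reindex e.symm)
      ((MonoidAlgebra.basis G R).reindex e.symm) (LinearMap.mulRight R w))ᵀ := by
  ext i j
  simp only [rgMatrix, Matrix.of_apply, Matrix.transpose_apply, LinearMap.toMatrix_apply,
    Module.Basis.reindex_apply, Module.Basis.repr_reindex_apply, Equiv.symm_symm,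
    MonoidAlgebra.basis_apply, LinearMap.mulRight_apply]
  exact (one_mul _).symm.trans (MonoidAlgebra.coeff_single_mul_apply w 1 (e i) (e j)).symm

theorem rank_rgMatrix {R : Type*} [Field R] {G : Type*} [Group G] {n : ℕ} (e : Fin n ≃ G)
    (w : MonoidAlgebra R G) :
    (rgMatrix e w).rank = finrank R (LinearMap.range (LinearMap.mulRight R w)) := by
  rw [rgMatrix_eq_transpose_toMatrix_mulRight, Matrix.rank_transpose,
    Matrix.rank_eq_finrank_range_toLin _ ((MonoidAlgebra.basis G R).reindex e.symm)
      ((MonoidAlgebra.basis G R).reindex e.symm), Matrix.toLin_toMatrix]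

theorem finrank_range_mulRight_algEquiv {K A B : Type*} [Field K] [Ring A] [Ring B]
    [Algebra K A] [Algebra K B] (Φ : A ≃ₐ[K] B) (a : A) :
    finrank K (LinearMap.range (LinearMap.mulRight K (Φ a)))
      = finrank K (LinearMap.range (LinearMap.mulRight K a)) := by
  have hconj : LinearMap.mulRight K (Φ a)
      = Φ.toLinearMap ∘ₗ LinearMap.mulRight K a ∘ₗ Φ.symm.toLinearMap := by
    ext x; simp
  rw [hconj, LinearMap.range_comp, LinearMap.range_comp_of_range_eq_top _
    (LinearMap.range_eq_top.2 Φ.symm.surjective)]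
  exact LinearEquiv.finrank_map_eq Φ.toLinearEquiv _

theorem MonoidAlgebra.aeval_of_surjective {R : Type*} [CommSemiring R] {G : Type*} [Monoid G]
    {g0 : G} (hg0 : ∀ g : G, ∃ k : ℕ, g0 ^ k = g) :
    Function.Surjective (aeval (R := R) (MonoidAlgebra.of R G g0)) := by
  intro w
  induction w using MonoidAlgebra.induction_on with
  | of g =>
    obtain ⟨k, rfl⟩ := hg0 g
    exact ⟨X ^ k, by rw [map_pow, aeval_X, map_pow]⟩
  | add x y hx hy =>
    obtain ⟨a, rfl⟩ := hx; obtain ⟨c, rfl⟩ := hy; exact ⟨a + c, map_add _ a c⟩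
  | smul r x hx =>
    obtain ⟨a, rfl⟩ := hx; exact ⟨r • a, map_smul _ r a⟩

namespace AdjoinRoot

theorem ker_mulRight_mk_eq_range {R : Type*} [CommRing R] [IsDomain R] {p q : R[X]}
    (hp : p ≠ 0) :
    LinearMap.ker (LinearMap.mulRight R (mk (p * q) p))
      = LinearMap.range (LinearMap.mulRight R (mk (p * q) q)) := by
  refine le_antisymm (fun x hx => ?_) (LinearMap.range_le_ker_iff.2 ?_)
  · obtain ⟨F, rfl⟩ := mk_surjective x
    rw [LinearMap.mem_ker, LinearMap.mulRight_apply, ← map_mul, mk_eq_zero, mul_comm F] at hx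
    obtain ⟨c, rfl⟩ := (mul_dvd_mul_iff_left hp).1 hx
    exact ⟨mk _ c, by rw [LinearMap.mulRight_apply, ← map_mul, mul_comm c]⟩
  · ext x
    simp only [LinearMap.comp_apply, LinearMap.mulRight_apply, LinearMap.zero_apply, mul_assoc,
      ← map_mul, mul_comm q p, mk_self, mul_zero]

theorem finrank_range_mulRight_add {K : Type*} [Field K] {p q : K[X]} (hpq : p * q ≠ 0) :
    finrank K (LinearMap.range (LinearMap.mulRight K (mk (p * q) p)))
      + finrank K (LinearMap.range (LinearMap.mulRight K (mk (p * q) q)))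
      = (p * q).natDegree := by
  have := (powerBasis hpq).finite
  rw [← ker_mulRight_mk_eq_range (left_ne_zero_of_mul hpq),
    LinearMap.finrank_range_add_finrank_ker, (powerBasis hpq).finrank, powerBasis_dim]

variable {K A : Type*} [Field K] [Ring A] [Algebra K A]

/-- `AdjoinRoot.liftAlgHom` needs a commutative target, which a group algebra is not. -/
noncomputable def liftAeval (f : K[X]) (x : A) (hx : aeval x f = 0) : AdjoinRoot f →ₐ[K] A :=
  Ideal.Quotient.liftₐ _ (aeval x) fun a ha => by
    obtain ⟨c, rfl⟩ := Ideal.mem_span_singleton.1 ha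
    rw [map_mul, hx, zero_mul]

variable {f : K[X]} {x : A}

theorem liftAeval_mk (hx : aeval x f = 0) (g : K[X]) : liftAeval f x hx (mk f g) = aeval x g :=
  rfl

theorem bijective_liftAeval (hf : f ≠ 0) (hx : aeval x f = 0)
    (hsurj : Function.Surjective (aeval x : K[X] →ₐ[K] A))
    (hdim : finrank K A = f.natDegree) : Function.Bijective (liftAeval f x hx) := by
  have := (powerBasis hf).finite
  have hsurj' : Function.Surjective (liftAeval f x hx) := fun a => by
    obtain ⟨g, rfl⟩ := hsurj a
    exact ⟨mk f g, liftAeval_mk hx g⟩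
  have := Module.Finite.of_surjective (liftAeval f x hx).toLinearMap hsurj'
  refine ⟨(LinearMap.injective_iff_surjective_of_finrank_eq_finrank
    (f := (liftAeval f x hx).toLinearMap) ?_).2 hsurj', hsurj'⟩
  rw [hdim, (powerBasis hf).finrank, powerBasis_dim]

end AdjoinRoot

/-- let `G` be cyclic of order `n` generated by `g0`, with listing
`1, g0, g0², …, g0^(n-1)`, and let `p, q ∈ R[x]` with `p q = xⁿ - 1`. Let `u, v ∈ RG`
be the images of `p, q` under the ring homomorphism `R[x] → RG` sending `x` to `g0`.
Then `rank σ(u) + rank σ(v) = n`. -/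
theorem stmt17 {R : Type*} [Field R] {G : Type*} [Group G] {n : ℕ}
    (g0 : G) (e : Fin n ≃ G) (he : ∀ i : Fin n, e i = g0 ^ (i : ℕ))
    (p q : Polynomial R) (hpq : p * q = Polynomial.X ^ n - 1) :
    (rgMatrix e (Polynomial.aeval (MonoidAlgebra.of R G g0) p)).rank
      + (rgMatrix e (Polynomial.aeval (MonoidAlgebra.of R G g0) q)).rank = n := by
  have hcard : Nat.card G = n := Nat.card_eq_of_equiv_fin e.symm
  have hpowers (g : G) : ∃ k : ℕ, g0 ^ k = g := ⟨e.symm g, by rw [← he, e.apply_symm_apply]⟩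
  have hdeg : (p * q).natDegree = n := by rw [hpq, ← C_1, natDegree_X_pow_sub_C]
  have hpq0 : p * q ≠ 0 := by
    rw [hpq, ← C_1]
    exact X_pow_sub_C_ne_zero (e.symm 1).pos 1
  have hx : aeval (MonoidAlgebra.of R G g0) (p * q) = 0 := by
    have := Finite.of_equiv _ e
    rw [hpq, map_sub, map_pow, aeval_X, ← map_pow, ← hcard, pow_card_eq_one', map_one, map_one,
      sub_self]
  let Φ := AlgEquiv.ofBijective _ (AdjoinRoot.bijective_liftAeval hpq0 hx
    (MonoidAlgebra.aeval_of_surjective hpowers)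
    (by rw [finrank_eq_nat_card_basis (MonoidAlgebra.basis G R), hcard, hdeg]))
  calc _ = finrank R (LinearMap.range (LinearMap.mulRight R (Φ (AdjoinRoot.mk _ p))))
        + finrank R (LinearMap.range (LinearMap.mulRight R (Φ (AdjoinRoot.mk _ q)))) := by
          rw [rank_rgMatrix, rank_rgMatrix]; rfl
    _ = n := by
      rw [finrank_range_mulRight_algEquiv, finrank_range_mulRight_algEquiv,
        AdjoinRoot.finrank_range_mulRight_add hpq0, hdeg]
end

section
/- Let R be a field, let G be the cyclic group of order n generated by g with listing 1, g, g², …, g^{n−1}, and let u ∈ RG. Suppose r is such that the family u, gu, g²u, …, g^{r−1}u is R-linearly independent while u, gu, g²u, …, g^r u is R-linearly dependent. Then rank σ(u) = r; equivalently, the R-span of {g^i u : 0 ≤ i ≤ n−1} has dimension r. -/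
open Module Submodule Set

theorem Module.End.span_range_pow_apply_eq_of_mem {R M : Type*} [Semiring R] [AddCommMonoid M]
    [Module R M] {f : Module.End R M} {v : M} {r : ℕ}
    (hr : (f ^ r) v ∈ span R (range fun i : Fin r => (f ^ (i : ℕ)) v)) :
    span R (range fun k : ℕ => (f ^ k) v) = span R (range fun i : Fin r => (f ^ (i : ℕ)) v) := by
  set W := span R (range fun i : Fin r => (f ^ (i : ℕ)) v)
  have hW : ∀ x ∈ W, f x ∈ W := by
    suffices W ≤ W.comap f from fun x hx => this hx
    refine span_le.mpr ?_
    rintro _ ⟨i, rfl⟩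
    change (f * f ^ (i : ℕ)) v ∈ W
    rw [← pow_succ']
    rcases (show (i : ℕ) + 1 ≤ r from i.isLt).lt_or_eq with hi | hi
    · exact subset_span ⟨⟨i + 1, hi⟩, rfl⟩
    · rwa [hi]
  refine le_antisymm (span_le.mpr ?_) (span_le.mpr ?_)
  · rintro _ ⟨k, rfl⟩
    by_cases hk : k < r
    · exact subset_span ⟨⟨k, hk⟩, rfl⟩
    · change (f ^ k) v ∈ W
      rw [← Nat.sub_add_cancel (not_lt.mp hk), pow_add, Module.End.mul_apply]
      exact Module.End.pow_apply_mem_of_forall_mem _ hW _ hr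
  · rintro _ ⟨i, rfl⟩
    exact subset_span ⟨i, rfl⟩

theorem mem_span_of_linearIndependent_of_not_linearIndependent_succ {K V : Type*} [DivisionRing K]
    [AddCommGroup V] [Module K V] {v : ℕ → V} {r : ℕ}
    (hind : LinearIndependent K fun i : Fin r => v i)
    (hdep : ¬ LinearIndependent K fun i : Fin (r + 1) => v i) :
    v r ∈ span K (range fun i : Fin r => v i) := by
  have hsnoc : (fun i : Fin (r + 1) => v i) = Fin.snoc (fun i : Fin r => v i) (v r) := by
    funext i
    induction i using Fin.lastCases <;> simp
  by_contra hr
  exact hdep (hsnoc ▸ linearIndependent_finSnoc.mpr ⟨hind, hr⟩)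

theorem Module.End.finrank_span_range_pow_apply_eq {K V : Type*} [DivisionRing K]
    [AddCommGroup V] [Module K V] {f : Module.End K V} {v : V} {r : ℕ}
    (hind : LinearIndependent K fun i : Fin r => (f ^ (i : ℕ)) v)
    (hdep : ¬ LinearIndependent K fun i : Fin (r + 1) => (f ^ (i : ℕ)) v) :
    finrank K (span K (range fun k : ℕ => (f ^ k) v)) = r := by
  rw [span_range_pow_apply_eq_of_mem
    (mem_span_of_linearIndependent_of_not_linearIndependent_succ (v := fun k => (f ^ k) v)
      hind hdep)]
  simpa using finrank_span_eq_card hind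

theorem rank_rgMatrix_eq_finrank_span {R G : Type*} [Field R] [Group G] {n : ℕ}
    (e : Fin n ≃ G) (w : MonoidAlgebra R G) :
    (rgMatrix e w).rank =
      finrank R (span R (range fun i : Fin n => MonoidAlgebra.of R G (e i) * w)) := by
  let Φ : MonoidAlgebra R G ≃ₗ[R] (Fin n → R) :=
    (MonoidAlgebra.coeffLinearEquiv R).trans <|
      (Finsupp.domLCongr e.symm).trans (Finsupp.linearEquivFunOnFinite R R (Fin n))
  have hrow : (rgMatrix e w).row = Φ ∘ fun i => MonoidAlgebra.of R G (e i) * w := by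
    funext i j
    change w.coeff ((e i)⁻¹ * e j) = (MonoidAlgebra.of R G (e i) * w).coeff (e j)
    rw [MonoidAlgebra.of_apply, MonoidAlgebra.coeff_single_mul_apply, one_mul]
  rw [Matrix.rank_eq_finrank_span_row, hrow, range_comp, ← LinearEquiv.coe_coe, ← map_span]
  exact LinearEquiv.finrank_map_eq Φ _

/-- let `G` be cyclic of order `n` generated by `g0` with listing
`1, g0, …, g0^(n-1)`, and `u ∈ RG`. If `u, g0 u, …, g0^(r-1) u` is linearly
independent while `u, g0 u, …, g0^r u` is linearly dependent, then `rank σ(u) = r`;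
equivalently, the span of `{g0^i u : 0 ≤ i ≤ n - 1}` has dimension `r`. -/
theorem stmt18 {R : Type*} [Field R] {G : Type*} [Group G] {n r : ℕ}
    (g0 : G) (e : Fin n ≃ G) (he : ∀ i : Fin n, e i = g0 ^ (i : ℕ))
    (u : MonoidAlgebra R G)
    (h_indep : LinearIndependent R
      fun i : Fin r => MonoidAlgebra.of R G (g0 ^ (i : ℕ)) * u)
    (h_dep : ¬ LinearIndependent R
      fun i : Fin (r + 1) => MonoidAlgebra.of R G (g0 ^ (i : ℕ)) * u) :
    (rgMatrix e u).rank = r ∧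
    Module.finrank R (Submodule.span R
      (Set.range fun i : Fin n => MonoidAlgebra.of R G (g0 ^ (i : ℕ)) * u)) = r := by
  set f := LinearMap.mulLeft R (MonoidAlgebra.of R G g0)
  have hf : ∀ k : ℕ, (f ^ k) u = MonoidAlgebra.of R G (g0 ^ k) * u := fun k => by
    rw [LinearMap.pow_mulLeft, LinearMap.mulLeft_apply, map_pow]
  have hG : range (fun i : Fin n => g0 ^ (i : ℕ)) = univ := funext he ▸ e.range_eq_univ
  have hG' : range (fun k : ℕ => g0 ^ k) = univ :=
    eq_univ_of_subset (range_comp_subset_range Fin.val (g0 ^ ·)) hG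
  have hspan : span R (range fun k : ℕ => (f ^ k) u) =
      span R (range fun i : Fin n => MonoidAlgebra.of R G (g0 ^ (i : ℕ)) * u) := by
    simp only [hf]
    rw [range_comp' (fun x => MonoidAlgebra.of R G x * u) (g0 ^ ·), hG',
      range_comp' (fun x => MonoidAlgebra.of R G x * u), hG]
  have hrank := Module.End.finrank_span_range_pow_apply_eq (f := f) (v := u)
    (by simpa only [hf] using h_indep) (by simpa only [hf] using h_dep)
  rw [hspan] at hrank
  refine ⟨?_, hrank⟩
  rw [rank_rgMatrix_eq_finrank_span, ← hrank, funext he]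
end

section
/- Let R be a field and let D_{2n} = ⟨a, b : a² = 1, bⁿ = 1, ab = b⁻¹a⟩ be the dihedral group of order 2n (in Lean: DihedralGroup n), and let u ∈ R·D_{2n}. Suppose k is such that u, bu, …, b^{k−1}u is R-linearly independent while u, bu, …, b^k u is R-linearly dependent; and suppose l is such that u, bu, …, b^{k−1}u, au, abu, …, ab^{l−1}u is R-linearly independent while u, bu, …, b^{k−1}u, au, abu, …, ab^l u is R-linearly dependent. Then the R-span of {h·u : h ∈ D_{2n}} has dimension k + l. -/
open Submodule

/-- If `v` is linearly independent, `f` extends `v` by one element, and `f` is dependent,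
then the extra element lies in the span of `v`. -/
lemma extract_mem {R M ι : Type*} [Field R] [AddCommGroup M] [Module R M] [Fintype ι]
    {v : ι → M} (hv : LinearIndependent R v) {f : Option ι → M}
    (hf : ∀ i, f (some i) = v i) (hdep : ¬ LinearIndependent R f) :
    f none ∈ Submodule.span R (Set.range v) := by
  obtain ⟨g, hsum, o, ho⟩ := Fintype.not_linearIndependent_iff.mp hdep
  rw [Fintype.sum_option] at hsum
  simp only [hf] at hsum
  by_cases h0 : g none = 0
  · exfalso
    have hz : ∑ i, g (some i) • v i = 0 := by
      rwa [h0, zero_smul, zero_add] at hsum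
    have := Fintype.linearIndependent_iff.mp hv (fun i => g (some i)) hz
    cases o with
    | none => exact ho h0
    | some i => exact ho (this i)
  · have hx : f none = (g none)⁻¹ • (-(∑ i, g (some i) • v i)) := by
      rw [← eq_neg_of_add_eq_zero_left hsum, inv_smul_smul₀ h0]
    rw [hx]
    exact Submodule.smul_mem _ _ (Submodule.neg_mem _ (Submodule.sum_mem _ fun i _ =>
      Submodule.smul_mem _ _ (Submodule.subset_span ⟨i, rfl⟩)))

/-- Variant of `extract_mem` for a `Sum.elim` family whose right part is extended by
one element. -/
lemma extract_mem_sum {R M ι κ : Type*} [Field R] [AddCommGroup M] [Module R M]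
    [Fintype ι] [Fintype κ]
    {v : ι → M} {w : κ → M} (hv : LinearIndependent R (Sum.elim v w))
    {w' : Option κ → M} (hw : ∀ j, w' (some j) = w j)
    (hdep : ¬ LinearIndependent R (Sum.elim v w')) :
    w' none ∈ Submodule.span R (Set.range (Sum.elim v w)) := by
  obtain ⟨g, hsum, o, ho⟩ := Fintype.not_linearIndependent_iff.mp hdep
  rw [Fintype.sum_sum_type] at hsum
  simp only [Sum.elim_inl, Sum.elim_inr] at hsum
  rw [Fintype.sum_option] at hsum
  simp only [hw] at hsum
  by_cases h0 : g (Sum.inr none) = 0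
  · exfalso
    have hz : ∑ x : ι ⊕ κ,
        (Sum.elim (fun i => g (Sum.inl i)) (fun j => g (Sum.inr (some j)))) x •
          Sum.elim v w x = 0 := by
      rw [Fintype.sum_sum_type]
      simp only [Sum.elim_inl, Sum.elim_inr]
      rw [h0, zero_smul, zero_add] at hsum
      linear_combination (norm := abel) hsum
    have hall := Fintype.linearIndependent_iff.mp hv _ hz
    rcases o with i | o
    · exact ho (hall (Sum.inl i))
    · rcases o with _ | j
      · exact ho h0
      · exact ho (hall (Sum.inr j))
  · have hx : w' none = (g (Sum.inr none))⁻¹ •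
        (-(∑ i, g (Sum.inl i) • v i + ∑ j, g (Sum.inr (some j)) • w j)) := by
      have h1 : g (Sum.inr none) • w' none
          = -(∑ i, g (Sum.inl i) • v i + ∑ j, g (Sum.inr (some j)) • w j) := by
        linear_combination (norm := abel) hsum
      rw [← h1, inv_smul_smul₀ h0]
    rw [hx]
    refine Submodule.smul_mem _ _ (Submodule.neg_mem _ (Submodule.add_mem _ ?_ ?_))
    · exact Submodule.sum_mem _ fun i _ =>
        Submodule.smul_mem _ _ (Submodule.subset_span ⟨Sum.inl i, rfl⟩)
    · exact Submodule.sum_mem _ fun j _ =>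
        Submodule.smul_mem _ _ (Submodule.subset_span ⟨Sum.inr j, rfl⟩)

/-- let `D_{2n}` be the dihedral group of order `2n` with generators
`a = sr 0` (`a² = 1`) and `b = r 1` (`bⁿ = 1`, `a b = b⁻¹ a`), and `u ∈ R·D_{2n}`.
If `u, b u, …, b^(k-1) u` is linearly independent while `u, b u, …, b^k u` is
dependent, and `u, b u, …, b^(k-1) u, a u, a b u, …, a b^(l-1) u` is independent
while `u, b u, …, b^(k-1) u, a u, a b u, …, a b^l u` is dependent, then the span of
`{h u : h ∈ D_{2n}}` has dimension `k + l`. -/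
theorem stmt19 {R : Type*} [Field R] {n k l : ℕ} [NeZero n]
    (u : MonoidAlgebra R (DihedralGroup n))
    (a b : DihedralGroup n)
    (ha : a = DihedralGroup.sr 0) (hb : b = DihedralGroup.r 1)
    (hk_indep : LinearIndependent R
      fun i : Fin k => MonoidAlgebra.of R (DihedralGroup n) (b ^ (i : ℕ)) * u)
    (hk_dep : ¬ LinearIndependent R
      fun i : Fin (k + 1) => MonoidAlgebra.of R (DihedralGroup n) (b ^ (i : ℕ)) * u)
    (hl_indep : LinearIndependent R (Sum.elim
      (fun i : Fin k => MonoidAlgebra.of R (DihedralGroup n) (b ^ (i : ℕ)) * u)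
      (fun j : Fin l => MonoidAlgebra.of R (DihedralGroup n) (a * b ^ (j : ℕ)) * u)))
    (hl_dep : ¬ LinearIndependent R (Sum.elim
      (fun i : Fin k => MonoidAlgebra.of R (DihedralGroup n) (b ^ (i : ℕ)) * u)
      (fun j : Fin (l + 1) => MonoidAlgebra.of R (DihedralGroup n) (a * b ^ (j : ℕ)) * u))) :
    Module.finrank R (Submodule.span R
      (Set.range fun h : DihedralGroup n =>
        MonoidAlgebra.of R (DihedralGroup n) h * u)) = k + l := by
  classical
  have hmul : ∀ g h : DihedralGroup n,
      MonoidAlgebra.of R (DihedralGroup n) g * (MonoidAlgebra.of R (DihedralGroup n) h * u)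
        = MonoidAlgebra.of R (DihedralGroup n) (g * h) * u := fun g h => by
    rw [← mul_assoc, ← map_mul]
  set v1 : Fin k → MonoidAlgebra R (DihedralGroup n) :=
    fun i => MonoidAlgebra.of R (DihedralGroup n) (b ^ (i : ℕ)) * u with hv1
  set v2 : Fin l → MonoidAlgebra R (DihedralGroup n) :=
    fun j => MonoidAlgebra.of R (DihedralGroup n) (a * b ^ (j : ℕ)) * u with hv2
  set W : Submodule R (MonoidAlgebra R (DihedralGroup n)) :=
    Submodule.span R (Set.range (Sum.elim v1 v2)) with hWdef
  -- Step 1a : `b^k u` lies in the span of `v1`.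
  have hbk : MonoidAlgebra.of R (DihedralGroup n) (b ^ k) * u
      ∈ Submodule.span R (Set.range v1) := by
    have hdep' : ¬ LinearIndependent R
        ((fun i : Fin (k + 1) => MonoidAlgebra.of R (DihedralGroup n) (b ^ (i : ℕ)) * u)
          ∘ (finSuccEquivLast (n := k)).symm) := fun h =>
      hk_dep ((linearIndependent_equiv finSuccEquivLast.symm).mp h)
    have := extract_mem hk_indep (f := (fun i : Fin (k + 1) =>
        MonoidAlgebra.of R (DihedralGroup n) (b ^ (i : ℕ)) * u)
          ∘ (finSuccEquivLast (n := k)).symm) (fun i => by simp [hv1]) hdep'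
    simpa using this
  -- Step 1b : `a * b^l u` lies in `W`.
  have habl : MonoidAlgebra.of R (DihedralGroup n) (a * b ^ l) * u ∈ W := by
    set w' : Option (Fin l) → MonoidAlgebra R (DihedralGroup n) :=
      (fun j : Fin (l + 1) => MonoidAlgebra.of R (DihedralGroup n) (a * b ^ (j : ℕ)) * u)
        ∘ (finSuccEquivLast (n := l)).symm with hw'
    have hdep' : ¬ LinearIndependent R (Sum.elim v1 w') := by
      intro h
      apply hl_dep
      refine (linearIndependent_equiv'
        (Equiv.sumCongr (Equiv.refl (Fin k)) (finSuccEquivLast (n := l)).symm) ?_).mp h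
      funext x
      rcases x with i | o <;> simp [hw']
    have := extract_mem_sum hl_indep (w' := w') (fun j => by simp [hw', hv2]) hdep'
    simpa only [hw', Function.comp_apply, finSuccEquivLast_symm_none, Fin.val_last]
      using this
  have hgen1 : ∀ i : Fin k, v1 i ∈ W := fun i => Submodule.subset_span ⟨Sum.inl i, rfl⟩
  have hgen2 : ∀ j : Fin l, v2 j ∈ W := fun j => Submodule.subset_span ⟨Sum.inr j, rfl⟩
  have hspanle : Submodule.span R (Set.range v1) ≤ W :=
    Submodule.span_le.mpr (by rintro x ⟨i, rfl⟩; exact hgen1 i)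
  -- Step 2a : all powers of `b` applied to `u` are in `W`.
  have hbpow : ∀ m : ℕ, MonoidAlgebra.of R (DihedralGroup n) (b ^ m) * u ∈ W := by
    intro m
    induction m using Nat.strong_induction_on with
    | _ m IH =>
      by_cases hm : m < k
      · exact hgen1 ⟨m, hm⟩
      · push_neg at hm
        have hsplit : b ^ m = b ^ (m - k) * b ^ k := by
          rw [← pow_add]; congr 1; omega
        rw [hsplit, ← hmul]
        refine Submodule.span_induction
          (p := fun x _ => MonoidAlgebra.of R (DihedralGroup n) (b ^ (m - k)) * x ∈ W)
          ?_ ?_ ?_ ?_ hbk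
        · rintro x ⟨i, rfl⟩
          rw [hv1]
          simp only
          rw [hmul, ← pow_add]
          exact IH _ (by omega)
        · simp
        · intro x y _ _ hx hy
          rw [mul_add]; exact W.add_mem hx hy
        · intro c x _ hx
          rw [mul_smul_comm]; exact W.smul_mem c hx
  -- the key commutation identity in the dihedral group
  have hid : ∀ s t : ℕ, b ^ (t * (n - 1)) * (a * b ^ s) = a * b ^ (s + t) := by
    intro s t
    subst ha hb
    have hcast : ((0 : ZMod n) + s) - ((t * (n - 1) : ℕ) : ZMod n)
        = (0 : ZMod n) + ((s + t : ℕ) : ZMod n) := by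
      push_cast [Nat.cast_sub (Nat.one_le_iff_ne_zero.mpr (NeZero.ne n)),
        ZMod.natCast_self]
      ring
    simp only [DihedralGroup.r_one_pow, DihedralGroup.sr_mul_r, DihedralGroup.r_mul_sr,
      hcast]
  -- Step 2b : all `a * b^m` applied to `u` are in `W`.
  have habpow : ∀ m : ℕ, MonoidAlgebra.of R (DihedralGroup n) (a * b ^ m) * u ∈ W := by
    intro m
    induction m using Nat.strong_induction_on with
    | _ m IH =>
      by_cases hm : m < l
      · exact hgen2 ⟨m, hm⟩
      · push_neg at hm
        obtain ⟨t, rfl⟩ : ∃ t, m = l + t := ⟨m - l, by omega⟩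
        rw [← hid l t, ← hmul]
        refine Submodule.span_induction
          (p := fun x _ =>
            MonoidAlgebra.of R (DihedralGroup n) (b ^ (t * (n - 1))) * x ∈ W)
          ?_ ?_ ?_ ?_ habl
        · rintro x ⟨s, rfl⟩
          rcases s with i | j
          · simp only [Sum.elim_inl, hv1]
            rw [hmul, ← pow_add]
            exact hbpow _
          · simp only [Sum.elim_inr, hv2]
            rw [hmul, hid]
            rcases Nat.eq_zero_or_pos t with rfl | ht
            · exact hgen2 ⟨(j : ℕ) + 0, by omega⟩
            · exact IH _ (by omega)
        · simp
        · intro x y _ _ hx hy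
          rw [mul_add]; exact W.add_mem hx hy
        · intro c x _ hx
          rw [mul_smul_comm]; exact W.smul_mem c hx
  -- Step 3 : the span of the orbit equals `W`.
  have hVW : Submodule.span R (Set.range fun h : DihedralGroup n =>
      MonoidAlgebra.of R (DihedralGroup n) h * u) = W := by
    apply le_antisymm
    · rw [Submodule.span_le]
      rintro x ⟨h, rfl⟩
      rcases h with i | i
      · have : DihedralGroup.r i = b ^ (i.val) := by
          subst hb
          simp [DihedralGroup.r_one_pow, ZMod.natCast_val, ZMod.cast_id]
        simp only [this]
        exact hbpow i.val
      · have : DihedralGroup.sr i = a * b ^ (i.val) := by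
          subst ha hb
          simp [DihedralGroup.r_one_pow, ZMod.natCast_val, ZMod.cast_id]
        simp only [this]
        exact habpow i.val
    · rw [hWdef, Submodule.span_le]
      rintro x ⟨s, rfl⟩
      rcases s with i | j
      · exact Submodule.subset_span ⟨b ^ (i : ℕ), rfl⟩
      · exact Submodule.subset_span ⟨a * b ^ (j : ℕ), rfl⟩
  rw [hVW, hWdef]
  rw [Module.finrank_eq_card_basis (Module.Basis.span hl_indep)]
  simp
end
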